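/- Define semi-norms μ_{u,v}(t,R) = Σ_{j=0}^{min(2u,v)} t^{u-j/2} R^{v-j} for u ∈ (1/2)ℕ₀, v ∈ ℕ₀, t ≥ 0, R ≥ 0. Then for all u, u', v, v' there is a constant C with μ_{u,v}(t,R)·μ_{u',v'}(t,R) ≤ C·μ_{u+u',v+v'}(t,R) for all t, R ≥ 0. -/
import Mathlib


/-- The weight `μ_{u,v}(t,R) = Σ_{j=0}^{min(2u,v)} t^(u-j/2) R^(v-j)`, where `u = p/2`
with `p ∈ ℕ` (so `u ∈ (1/2)ℕ₀`) and `v ∈ ℕ₀`. -/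
noncomputable def mu (p v : ℕ) (t R : ℝ) : ℝ :=
  ∑ j ∈ Finset.range (min p v + 1), t ^ (((p : ℝ) - (j : ℝ)) / 2) * R ^ (v - j)

/-- Submultiplicativity of the weights: for all `u, u', v, v'` there is a constant `C`
with `μ_{u,v}(t,R)·μ_{u',v'}(t,R) ≤ C·μ_{u+u',v+v'}(t,R)` for all `t, R ≥ 0`. -/
theorem mu_submultiplicative (p v p' v' : ℕ) :
    ∃ C : ℝ, 0 < C ∧ ∀ t R : ℝ, 0 ≤ t → 0 ≤ R →
      mu p v t R * mu p' v' t R ≤ C * mu (p + p') (v + v') t R := by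
  refine ⟨((min p v + 1) * (min p' v' + 1) : ℕ), by positivity, ?_⟩
  intro t R ht hR
  set s := Real.sqrt t with hs
  have hs0 : 0 ≤ s := Real.sqrt_nonneg t
  have key : ∀ q w : ℕ, mu q w t R
      = ∑ j ∈ Finset.range (min q w + 1), s ^ (q - j) * R ^ (w - j) := by
    intro q w
    unfold mu
    refine Finset.sum_congr rfl fun j hj => ?_
    have hj' : j ≤ q := by
      have := Finset.mem_range.mp hj; omega
    congr 1
    rw [show ((q:ℝ) - j)/2 = (1/2) * ((q - j : ℕ) : ℝ) by push_cast [hj']; ring,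
      Real.rpow_mul ht, Real.rpow_natCast, hs, Real.sqrt_eq_rpow]
  rw [key, key, key, Finset.sum_mul_sum]
  have hbound : ∀ j ∈ Finset.range (min p v + 1), ∀ j' ∈ Finset.range (min p' v' + 1),
      s ^ (p - j) * R ^ (v - j) * (s ^ (p' - j') * R ^ (v' - j'))
        ≤ ∑ k ∈ Finset.range (min (p+p') (v+v') + 1), s ^ (p+p' - k) * R ^ (v+v' - k) := by
    intro j hj j' hj'
    simp only [Finset.mem_range] at hj hj'
    have h1 : j + j' ∈ Finset.range (min (p+p') (v+v') + 1) := by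
      simp only [Finset.mem_range]; omega
    have h2 : s ^ (p - j) * R ^ (v - j) * (s ^ (p' - j') * R ^ (v' - j'))
        = s ^ (p+p' - (j+j')) * R ^ (v+v' - (j+j')) := by
      rw [show p+p' - (j+j') = (p-j) + (p'-j') by omega,
        show v+v' - (j+j') = (v-j) + (v'-j') by omega, pow_add, pow_add]
      ring
    rw [h2]
    exact Finset.single_le_sum (f := fun k => s ^ (p+p' - k) * R ^ (v+v' - k))
      (fun k _ => by positivity) h1
  calc ∑ j ∈ Finset.range (min p v + 1), ∑ j' ∈ Finset.range (min p' v' + 1),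
        s ^ (p - j) * R ^ (v - j) * (s ^ (p' - j') * R ^ (v' - j'))
      ≤ ∑ _j ∈ Finset.range (min p v + 1), ∑ _j' ∈ Finset.range (min p' v' + 1),
        ∑ k ∈ Finset.range (min (p+p') (v+v') + 1), s ^ (p+p' - k) * R ^ (v+v' - k) :=
        Finset.sum_le_sum fun j hj => Finset.sum_le_sum fun j' hj' => hbound j hj j' hj'
    _ = _ := by
        simp [Finset.sum_const, Finset.card_range, nsmul_eq_mul]
        ring
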